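/- arXiv:1006.0409 — 4 statements merged into one kernel-verified Lean document; each statement's English description precedes it below -/
import Mathlib

section
/- Let d : [2,3] → ℝ be sufficiently smooth with d(2) = d(3) = 0, d'(2) > 0, d''(2) > 0, and d⁽⁴⁾ < 0 on (2,3) (i.e., d'' strictly concave). Then d(t) > 0 for all t ∈ (2,3). -/
open Set Filter Topology

theorem stmt_5 (d : ℝ → ℝ)
    (hsmooth : ContDiff ℝ (⊤ : ℕ∞) d)
    (h2 : d 2 = 0) (h3 : d 3 = 0)
    (hd1 : 0 < deriv d 2)
    (hd2 : 0 < iteratedDeriv 2 d 2)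
    (hconc : ∀ t ∈ Ioo (2:ℝ) 3, iteratedDeriv 4 d t < 0) :
    ∀ t ∈ Ioo (2:ℝ) 3, 0 < d t := by
  have hs' : ContDiff ℝ ((⊤:ℕ∞) : WithTop ℕ∞) d := hsmooth.of_le (by simp)
  have hd' : ContDiff ℝ ((⊤:ℕ∞) : WithTop ℕ∞) (deriv d) := (contDiff_infty_iff_deriv.mp hs').2
  have hg : ContDiff ℝ ((⊤:ℕ∞) : WithTop ℕ∞) (iteratedDeriv 2 d) := by
    rw [show (2:ℕ) = 1 + 1 from rfl, iteratedDeriv_succ, iteratedDeriv_one]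
    exact (contDiff_infty_iff_deriv.mp hd').2
  have hdcont : Continuous d := hsmooth.continuous
  have hd'diff : Differentiable ℝ (deriv d) := hd'.differentiable (by simp)
  have hderiv2 : deriv (deriv d) = iteratedDeriv 2 d := by
    rw [show (2:ℕ) = 1 + 1 from rfl, iteratedDeriv_succ, iteratedDeriv_one]
  have hcv : StrictConcaveOn ℝ (Icc (2:ℝ) 3) (iteratedDeriv 2 d) := by
    apply strictConcaveOn_of_deriv2_neg (convex_Icc _ _) hg.continuous.continuousOn
    intro x hx
    rw [interior_Icc] at hx
    have h4eq : iteratedDeriv 4 d = deriv (deriv (iteratedDeriv 2 d)) := by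
      conv_lhs => rw [show (4:ℕ) = 2 + 1 + 1 by norm_num, iteratedDeriv_succ, iteratedDeriv_succ]
    have h4 : deriv^[2] (iteratedDeriv 2 d) x = iteratedDeriv 4 d x := by
      rw [h4eq]; rfl
    rw [h4]
    exact hconc x hx
  by_contra hcon
  push_neg at hcon
  obtain ⟨t₀, ht₀, ht₀le⟩ := hcon
  -- find a ∈ (2, t₀) with 0 < d a
  obtain ⟨a, ha2, hat₀, hda⟩ : ∃ a, 2 < a ∧ a < t₀ ∧ 0 < d a := by
    have hda : HasDerivAt d (deriv d 2) 2 := (hs'.differentiable (by simp) 2).hasDerivAt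
    have htend := hasDerivAt_iff_tendsto_slope.mp hda
    have hev : ∀ᶠ x in 𝓝[≠] (2:ℝ), 0 < slope d 2 x :=
      htend.eventually (eventually_gt_nhds hd1)
    have hle : 𝓝[>] (2:ℝ) ≤ 𝓝[≠] (2:ℝ) :=
      nhdsWithin_mono _ (fun x hx => ne_of_gt hx)
    have hev' : ∀ᶠ x in 𝓝[>] (2:ℝ), 0 < slope d 2 x := hev.filter_mono hle
    have hmem : Ioo (2:ℝ) t₀ ∈ 𝓝[>] (2:ℝ) := Ioo_mem_nhdsGT_of_mem ⟨le_refl _, ht₀.1⟩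
    obtain ⟨a, hs, haI⟩ := (hev'.and (eventually_of_mem hmem fun x hx => hx)).exists
    refine ⟨a, haI.1, haI.2, ?_⟩
    have : slope d 2 a = d a / (a - 2) := by
      rw [slope_def_field, h2]; ring_nf
    rw [this] at hs
    have h2a : (0:ℝ) < a - 2 := by linarith [haI.1]
    rcases div_pos_iff.mp hs with ⟨h, _⟩ | ⟨_, h⟩
    · exact h
    · linarith
  -- find z ∈ (a, 3) with d z = 0 (hence 2 < z < 3)
  obtain ⟨z, hz2, hz3, hdz⟩ : ∃ z, a < z ∧ z < 3 ∧ d z = 0 := by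
    rcases lt_or_eq_of_le ht₀le with hlt | heq
    · have := intermediate_value_Icc' (le_of_lt hat₀) hdcont.continuousOn
        (show (0:ℝ) ∈ Icc (d t₀) (d a) from ⟨le_of_lt hlt, le_of_lt hda⟩)
      obtain ⟨z, hzI, hz0⟩ := this
      refine ⟨z, ?_, ?_, hz0⟩
      · rcases eq_or_lt_of_le hzI.1 with h | h
        · exfalso; rw [← h] at hz0; linarith
        · exact h
      · exact lt_of_le_of_lt hzI.2 ht₀.2
    · exact ⟨t₀, hat₀, ht₀.2, heq⟩
  have hz2' : (2:ℝ) < z := lt_trans ha2 hz2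
  -- Rolle on [2,z] and [z,3]
  obtain ⟨x₁, hx₁, hdx₁⟩ := exists_deriv_eq_zero hz2' hdcont.continuousOn (by rw [h2, hdz])
  obtain ⟨x₂, hx₂, hdx₂⟩ := exists_deriv_eq_zero hz3 hdcont.continuousOn (by rw [hdz, h3])
  -- MVT for deriv d on [2, x₁]: get y₁ with iteratedDeriv 2 d y₁ < 0
  obtain ⟨y₁, hy₁, hgy₁⟩ := exists_deriv_eq_slope (deriv d) hx₁.1
    hd'.continuous.continuousOn (fun x _ => (hd'diff x).differentiableWithinAt)
  have hgy₁neg : iteratedDeriv 2 d y₁ < 0 := by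
    rw [← hderiv2, hgy₁, hdx₁]
    apply div_neg_of_neg_of_pos <;> [linarith; linarith [hx₁.1]]
  -- g < 0 on (y₁, 3) by strict concavity and g 2 > 0
  have hy₁2 : (2:ℝ) < y₁ := hy₁.1
  have hy₁3 : y₁ < 3 := by linarith [hy₁.2, hx₁.2, hz3]
  have hgneg : ∀ t ∈ Ioo y₁ (3:ℝ), iteratedDeriv 2 d t < 0 := by
    intro t ht
    by_contra hge
    push_neg at hge
    set lam : ℝ := (t - y₁) / (t - 2) with hlam
    have ht2 : (0:ℝ) < t - 2 := by linarith [ht.1]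
    have hl0 : 0 < lam := div_pos (by linarith [ht.1]) ht2
    have hl1 : lam < 1 := (div_lt_one ht2).mpr (by linarith)
    have hsum : lam + (1 - lam) = 1 := by ring
    have hcomb : lam * 2 + (1 - lam) * t = y₁ := by
      have hm : lam * (t - 2) = t - y₁ := by rw [hlam]; exact div_mul_cancel₀ _ ht2.ne'
      linear_combination -hm
    have hne : (2:ℝ) ≠ t := by linarith [ht.1]
    have := hcv.2 (show (2:ℝ) ∈ Icc (2:ℝ) 3 by constructor <;> norm_num)
      (show t ∈ Icc (2:ℝ) 3 from ⟨by linarith [ht.1], le_of_lt ht.2⟩)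
      hne hl0 (by linarith) hsum
    rw [show lam • (2:ℝ) + (1-lam) • t = y₁ by simpa [smul_eq_mul] using hcomb] at this
    have : lam * iteratedDeriv 2 d 2 + (1 - lam) * iteratedDeriv 2 d t < 0 := by
      simpa [smul_eq_mul] using lt_trans this hgy₁neg
    nlinarith [mul_pos hl0 hd2, mul_nonneg (by linarith : (0:ℝ) ≤ 1 - lam) hge]
  -- deriv d strictly anti on [y₁, 3]
  have hanti : StrictAntiOn (deriv d) (Icc y₁ 3) := by
    apply strictAntiOn_of_deriv_neg (convex_Icc _ _) hd'.continuous.continuousOn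
    intro x hx
    rw [interior_Icc] at hx
    rw [hderiv2]
    exact hgneg x hx
  have hx₁mem : x₁ ∈ Icc y₁ 3 := ⟨le_of_lt hy₁.2, by linarith [hx₁.2, hz3]⟩
  have hx₂mem : x₂ ∈ Icc y₁ 3 := ⟨by linarith [hy₁.2, hx₁.2, hx₂.1], le_of_lt hx₂.2⟩
  have hlt : x₁ < x₂ := lt_trans hx₁.2 hx₂.1
  have := hanti hx₁mem hx₂mem hlt
  rw [hdx₁, hdx₂] at this
  exact lt_irrefl 0 this
end

section
/- For all x ∈ ℝ, the minimum of G₊(x) = |1 + e(x) + e(3x)|² over ℝ is greater than 1/e, and the minimum of G₋(x) = |1 + e(x) - e(3x)|² over ℝ is greater than 1/9. -/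
/-!
With `u = cos θ`, multiplying out `|1 + z ± z³|²` for `z = e^{iθ}` on the unit circle gives the
cubics `8u³ + 4u² - 4u + 1` and `-8u³ - 4u² + 8u + 5`, whose minima on `[-1, 1]` are about
`0.3689 > 1/e` and `0.1206 > 1/9`.
-/

open Real Complex

lemma exp_mul_I_eq_ofReal (θ : ℝ) :
    Complex.exp (θ * I) = (Real.cos θ : ℂ) + (Real.sin θ : ℂ) * I := by
  rw [Complex.exp_mul_I, ← Complex.ofReal_cos, ← Complex.ofReal_sin]

lemma exp_three_mul_mul_I_eq_ofReal (θ : ℝ) :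
    Complex.exp ((3 * θ : ℝ) * I) =
      ((4 * Real.cos θ ^ 3 - 3 * Real.cos θ : ℝ) : ℂ) +
        ((3 * Real.sin θ - 4 * Real.sin θ ^ 3 : ℝ) : ℂ) * I := by
  rw [exp_mul_I_eq_ofReal, Real.cos_three_mul, Real.sin_three_mul]

lemma sq_norm_one_add_exp_mul_I_add_exp_three_mul_mul_I (θ : ℝ) :
    ‖1 + Complex.exp (θ * I) + Complex.exp ((3 * θ : ℝ) * I)‖ ^ 2 =
      8 * Real.cos θ ^ 3 + 4 * Real.cos θ ^ 2 - 4 * Real.cos θ + 1 := by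
  have hsc := Real.sin_sq_add_cos_sq θ
  rw [exp_mul_I_eq_ofReal, exp_three_mul_mul_I_eq_ofReal]
  generalize Real.cos θ = c, Real.sin θ = s at hsc ⊢
  simp only [Complex.sq_norm, Complex.normSq_apply, add_re, add_im, mul_re, mul_im, ofReal_re,
    ofReal_im, I_re, I_im, one_re, one_im]
  linear_combination (16 * s ^ 4 - 16 * s ^ 2 - 16 * s ^ 2 * c ^ 2 + 16 * c ^ 4) * hsc

lemma sq_norm_one_add_exp_mul_I_sub_exp_three_mul_mul_I (θ : ℝ) :
    ‖1 + Complex.exp (θ * I) - Complex.exp ((3 * θ : ℝ) * I)‖ ^ 2 =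
      -8 * Real.cos θ ^ 3 - 4 * Real.cos θ ^ 2 + 8 * Real.cos θ + 5 := by
  have hsc := Real.sin_sq_add_cos_sq θ
  rw [exp_mul_I_eq_ofReal, exp_three_mul_mul_I_eq_ofReal]
  generalize Real.cos θ = c, Real.sin θ = s at hsc ⊢
  simp only [Complex.sq_norm, Complex.normSq_apply, add_re, add_im, sub_re, sub_im, mul_re, mul_im,
    ofReal_re, ofReal_im, I_re, I_im, one_re, one_im]
  linear_combination (16 * s ^ 4 - 16 * s ^ 2 * c ^ 2 + 16 * c ^ 4 - 16 * c ^ 2 + 4) * hsc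

-- With `a = 0.2743` near the critical point, the cubic minus its value at `a` is
-- `8 (u - a)² (u + 2a + 1/2) ≥ 8 (u - a)² (u + 1)`.
lemma lt_plus_cubic_of_neg_one_le {u : ℝ} (hu : -1 ≤ u) :
    0.368 < 8 * u ^ 3 + 4 * u ^ 2 - 4 * u + 1 := by
  nlinarith [mul_nonneg (by linarith : (0 : ℝ) ≤ u + 1) (sq_nonneg (u - 0.2743)),
    sq_nonneg (u - 0.2743)]

-- With `b = -0.7676` near the critical point, the cubic minus its value at `b` is
-- `8 (u - b)² (-1/2 - 2b - u) ≥ 8 (u - b)² (1 - u)`.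
lemma lt_minus_cubic_of_le_one {u : ℝ} (hu : u ≤ 1) :
    1 / 9 < -8 * u ^ 3 - 4 * u ^ 2 + 8 * u + 5 := by
  nlinarith [mul_nonneg (by linarith : (0 : ℝ) ≤ 1 - u) (sq_nonneg (u + 0.7676)),
    sq_nonneg (u + 0.7676)]

lemma one_div_exp_one_lt : 1 / Real.exp 1 < 0.368 := by
  rw [div_lt_iff₀ (Real.exp_pos 1)]
  linarith [Real.exp_one_gt_d9]

theorem stmt_10 (x : ℝ) :
    1 / Real.exp 1 <
      (‖(1 + Complex.exp (2 * π * Complex.I * x) +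
        Complex.exp (2 * π * Complex.I * (3 * x)))‖) ^ 2 ∧
    1 / 9 <
      (‖(1 + Complex.exp (2 * π * Complex.I * x) -
        Complex.exp (2 * π * Complex.I * (3 * x)))‖) ^ 2 := by
  have h1 : 2 * π * I * x = ((2 * π * x : ℝ) : ℂ) * I := by push_cast; ring
  have h3 : 2 * π * I * (3 * x) = ((3 * (2 * π * x) : ℝ) : ℂ) * I := by push_cast; ring
  rw [h1, h3, sq_norm_one_add_exp_mul_I_add_exp_three_mul_mul_I,
    sq_norm_one_add_exp_mul_I_sub_exp_three_mul_mul_I]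
  exact ⟨one_div_exp_one_lt.trans (lt_plus_cubic_of_neg_one_le (Real.neg_one_le_cos _)),
    lt_minus_cubic_of_le_one (Real.cos_le_one _)⟩
end

section
/- For G₊(x) = |1 + e(x) + e(3x)|² and G₋(x) = |1 + e(x) - e(3x)|², the derivatives satisfy G₊'(x)² < 1300 · G₊(x) and G₋'(x)² < 1100 · G₋(x) for all x ∈ ℝ. -/
/-!
Writing `u = cos (2πx)`, both `G₊` and `G₋` are cubics `P(u)` in `u`, so by the chain rule
`G'(x)² = 4π² (1 - u²) P'(u)²`. With `π² < 79/8` each claim reduces to a polynomial inequality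
of degree six on `[-1, 1]`, certified by products of `1 - u²` with squares centred at the local
minima of the difference of its two sides.
-/

open Real Set

lemma norm_one_add_exp_add_exp_three_sq (θ : ℝ) :
    ‖1 + Complex.exp (θ * Complex.I) + Complex.exp (↑(3 * θ) * Complex.I)‖ ^ 2 =
      8 * cos θ ^ 3 + 4 * cos θ ^ 2 - 4 * cos θ + 1 := by
  rw [Complex.sq_norm, Complex.normSq_apply]
  simp only [Complex.add_re, Complex.add_im, Complex.one_re, Complex.one_im,
    Complex.exp_ofReal_mul_I_re, Complex.exp_ofReal_mul_I_im, cos_three_mul, sin_three_mul]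
  linear_combination
    (16 * sin θ ^ 4 - 16 * (1 + cos θ ^ 2) * sin θ ^ 2 + 16 * cos θ ^ 4) * sin_sq_add_cos_sq θ

lemma norm_one_add_exp_sub_exp_three_sq (θ : ℝ) :
    ‖1 + Complex.exp (θ * Complex.I) - Complex.exp (↑(3 * θ) * Complex.I)‖ ^ 2 =
      -8 * cos θ ^ 3 - 4 * cos θ ^ 2 + 8 * cos θ + 5 := by
  rw [Complex.sq_norm, Complex.normSq_apply]
  simp only [Complex.sub_re, Complex.sub_im, Complex.add_re, Complex.add_im, Complex.one_re,
    Complex.one_im, Complex.exp_ofReal_mul_I_re, Complex.exp_ofReal_mul_I_im, cos_three_mul,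
    sin_three_mul]
  linear_combination
    (16 * sin θ ^ 4 - 16 * cos θ ^ 2 * sin θ ^ 2 + 4 * (2 * cos θ ^ 2 - 1) ^ 2) * sin_sq_add_cos_sq θ

lemma hasDerivAt_cubic (a b c d u : ℝ) :
    HasDerivAt (fun u => a * u ^ 3 + b * u ^ 2 + c * u + d) (3 * a * u ^ 2 + 2 * b * u + c) u := by
  refine (((((hasDerivAt_pow 3 u).const_mul a).add ((hasDerivAt_pow 2 u).const_mul b)).add
    ((hasDerivAt_id u).const_mul c)).add_const d).congr_deriv ?_
  push_cast; ring

lemma hasDerivAt_comp_cos_two_pi_mul {f : ℝ → ℝ} {f' x : ℝ}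
    (hf : HasDerivAt f f' (cos (2 * π * x))) :
    HasDerivAt (fun y => f (cos (2 * π * y))) (-(2 * π * sin (2 * π * x)) * f') x := by
  have hcos := (hasDerivAt_cos (2 * π * x)).comp x ((hasDerivAt_id x).const_mul (2 * π))
  exact (hf.comp x hcos).congr_deriv (by ring)

lemma sq_deriv_comp_cos_two_pi_mul_lt {f f' : ℝ → ℝ} {K : ℝ} (hf : ∀ u, HasDerivAt f (f' u) u)
    (hK : ∀ u ∈ Icc (-1 : ℝ) 1, 4 * π ^ 2 * (1 - u ^ 2) * f' u ^ 2 < K * f u) (x : ℝ) :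
    deriv (fun y => f (cos (2 * π * y))) x ^ 2 < K * f (cos (2 * π * x)) := by
  rw [(hasDerivAt_comp_cos_two_pi_mul (hf _)).deriv]
  calc (-(2 * π * sin (2 * π * x)) * f' (cos (2 * π * x))) ^ 2
      = 4 * π ^ 2 * (1 - cos (2 * π * x) ^ 2) * f' (cos (2 * π * x)) ^ 2 := by
        rw [← sin_sq]; ring
    _ < K * f (cos (2 * π * x)) := hK _ ⟨neg_one_le_cos _, cos_le_one _⟩

lemma four_pi_sq_mul_le {u : ℝ} (hu : u ∈ Icc (-1 : ℝ) 1) (q : ℝ) :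
    4 * π ^ 2 * (1 - u ^ 2) * q ^ 2 ≤ 79 / 2 * (1 - u ^ 2) * q ^ 2 := by
  have hπ : π ^ 2 < 79 / 8 := by nlinarith [pi_pos, pi_lt_d4]
  have hu : 0 ≤ (1 - u ^ 2) * q ^ 2 := mul_nonneg (by nlinarith [hu.1, hu.2]) (sq_nonneg q)
  nlinarith

lemma bound_plus_of_mem_Icc {u : ℝ} (hu : u ∈ Icc (-1 : ℝ) 1) :
    632 * (1 - u ^ 2) * (6 * u ^ 2 + 2 * u - 1) ^ 2 <
      1300 * (8 * u ^ 3 + 4 * u ^ 2 - 4 * u + 1) := by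
  have hu : 0 ≤ 1 - u ^ 2 := by nlinarith [hu.1, hu.2]
  nlinarith [mul_nonneg hu (sq_nonneg (u * (u - 0.63))), mul_nonneg hu (sq_nonneg (u - 0.63)),
    mul_nonneg hu (sq_nonneg ((u + 0.63) * (u - 0.63))), sq_nonneg (u - 0.63),
    sq_nonneg (u * (u - 0.63))]

lemma bound_minus_of_mem_Icc {u : ℝ} (hu : u ∈ Icc (-1 : ℝ) 1) :
    2528 * (1 - u ^ 2) * (3 * u ^ 2 + u - 1) ^ 2 <
      1100 * (-8 * u ^ 3 - 4 * u ^ 2 + 8 * u + 5) := by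
  have hu : 0 ≤ 1 - u ^ 2 := by nlinarith [hu.1, hu.2]
  nlinarith [mul_nonneg hu (sq_nonneg ((u + 0.452) * (u + 0.768))),
    mul_nonneg hu (sq_nonneg ((u + 0.452) * (u - 0.944))),
    mul_nonneg hu (sq_nonneg ((u + 0.768) * (u - 0.944))),
    sq_nonneg ((u + 0.452) * (u + 0.768) * (u - 0.944))]

theorem stmt_11
    (Gp Gm : ℝ → ℝ)
    (hGp : ∀ x : ℝ, Gp x = (‖1 + Complex.exp (2 * π * Complex.I * x) +
        Complex.exp (2 * π * Complex.I * (3 * x))‖) ^ 2)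
    (hGm : ∀ x : ℝ, Gm x = (‖1 + Complex.exp (2 * π * Complex.I * x) -
        Complex.exp (2 * π * Complex.I * (3 * x))‖) ^ 2) :
    ∀ x : ℝ, (deriv Gp x) ^ 2 < 1300 * Gp x ∧ (deriv Gm x) ^ 2 < 1100 * Gm x := by
  have harg (y : ℝ) : 2 * π * Complex.I * y = ↑(2 * π * y) * Complex.I ∧
      2 * π * Complex.I * (3 * y) = ↑(3 * (2 * π * y)) * Complex.I :=
    ⟨by push_cast; ring, by push_cast; ring⟩
  have hp : Gp = fun y => (fun u => 8 * u ^ 3 + 4 * u ^ 2 + -4 * u + 1) (cos (2 * π * y)) := by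
    funext y
    rw [hGp, (harg y).1, (harg y).2, norm_one_add_exp_add_exp_three_sq]
    ring
  have hm : Gm = fun y => (fun u => -8 * u ^ 3 + -4 * u ^ 2 + 8 * u + 5) (cos (2 * π * y)) := by
    funext y
    rw [hGm, (harg y).1, (harg y).2, norm_one_add_exp_sub_exp_three_sq]
    ring
  intro x
  rw [hp, hm]
  exact ⟨sq_deriv_comp_cos_two_pi_mul_lt (hasDerivAt_cubic _ _ _ _)
      (fun u hu => (four_pi_sq_mul_le hu _).trans_lt
        (by linear_combination bound_plus_of_mem_Icc hu)) x,
    sq_deriv_comp_cos_two_pi_mul_lt (hasDerivAt_cubic _ _ _ _)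
      (fun u hu => (four_pi_sq_mul_le hu _).trans_lt
        (by linear_combination bound_minus_of_mem_Icc hu)) x⟩
end

section
/- For G₊(x) = |1 + e(x) + e(3x)|² and G₋(x) = |1 + e(x) - e(3x)|², we have |G₊''(x)| < 2200 · G₊(x) and |G₋''(x)| < 4000 · G₋(x) for all x ∈ ℝ. -/
/-!
With `u = cos (2πx)`, expanding the square gives the Fourier series
`|1 + a e(x) + b e(3x)|² = 1 + a² + b² + 2a cos 2πx + 2ab cos 4πx + 2b cos 6πx`, whose second
derivative is `-8π² (a cos 2πx + 4ab cos 4πx + 9b cos 6πx)`. By `cos 2θ = 2u² - 1` and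
`cos 3θ = 4u³ - 3u` both are cubics in `u`, and the theorem reduces to two polynomial
inequalities on `[-1, 1]` (with `8π² < 79`).
-/

open Real Complex

section CosineSums

variable {ι : Type*} (s : Finset ι) (a c : ι → ℝ) (x : ℝ)

theorem hasDerivAt_sum_mul_cos :
    HasDerivAt (fun y => ∑ i ∈ s, a i * Real.cos (c i * y))
      (-∑ i ∈ s, a i * c i * Real.sin (c i * x)) x := by
  rw [← Finset.sum_neg_distrib]
  exact HasDerivAt.fun_sum fun i _ =>
    (((hasDerivAt_const_mul (c i)).cos).const_mul (a i)).congr_deriv (by ring)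

theorem hasDerivAt_sum_mul_sin :
    HasDerivAt (fun y => ∑ i ∈ s, a i * Real.sin (c i * y))
      (∑ i ∈ s, a i * c i * Real.cos (c i * x)) x :=
  HasDerivAt.fun_sum fun i _ =>
    (((hasDerivAt_const_mul (c i)).sin).const_mul (a i)).congr_deriv (by ring)

theorem deriv_deriv_sum_mul_cos :
    deriv (deriv fun y => ∑ i ∈ s, a i * Real.cos (c i * y)) x =
      -∑ i ∈ s, a i * c i ^ 2 * Real.cos (c i * x) := by
  have h : deriv (fun y => ∑ i ∈ s, a i * Real.cos (c i * y)) =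
      fun y => -∑ i ∈ s, a i * c i * Real.sin (c i * y) :=
    funext fun y => (hasDerivAt_sum_mul_cos s a c y).deriv
  rw [h, (hasDerivAt_sum_mul_sin s (fun i => a i * c i) c x).fun_neg.deriv]
  simp only [sq, mul_assoc]

end CosineSums

theorem sq_norm_one_add_mul_exp_add_mul_exp (a b α β : ℝ) :
    ‖1 + a * exp (α * I) + b * exp (β * I)‖ ^ 2 =
      1 + a ^ 2 + b ^ 2 + 2 * a * Real.cos α + 2 * b * Real.cos β
        + 2 * a * b * Real.cos (β - α) := by
  rw [Complex.sq_norm, Complex.exp_mul_I, Complex.exp_mul_I, ← ofReal_cos, ← ofReal_sin,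
    ← ofReal_cos, ← ofReal_sin, normSq_apply]
  simp only [add_re, add_im, mul_re, mul_im, ofReal_re, ofReal_im, I_re, I_im, one_re, one_im]
  rw [Real.cos_sub]
  linear_combination a ^ 2 * Real.sin_sq_add_cos_sq α + b ^ 2 * Real.sin_sq_add_cos_sq β

noncomputable def sqNormTrinomial (a b x : ℝ) : ℝ :=
  ‖1 + a * exp (2 * π * I * x) + b * exp (2 * π * I * (3 * x))‖ ^ 2

namespace sqNormTrinomial

theorem eq_cos (a b x : ℝ) :
    sqNormTrinomial a b x = 1 + a ^ 2 + b ^ 2 + 2 * a * Real.cos (2 * π * x)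
      + 2 * a * b * Real.cos (4 * π * x) + 2 * b * Real.cos (6 * π * x) := by
  have h := sq_norm_one_add_mul_exp_add_mul_exp a b (2 * π * x) (6 * π * x)
  push_cast at h
  rw [sqNormTrinomial, show 2 * π * I * x = 2 * π * x * I by ring,
    show 2 * π * I * (3 * x) = 6 * π * x * I by ring, h,
    show 6 * π * x - 2 * π * x = 4 * π * x by ring]
  ring

theorem deriv_deriv_eq_cos (a b x : ℝ) :
    deriv (deriv (sqNormTrinomial a b)) x = -8 * π ^ 2 * (a * Real.cos (2 * π * x)
      + 4 * a * b * Real.cos (4 * π * x) + 9 * b * Real.cos (6 * π * x)) := by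
  have h : sqNormTrinomial a b = fun y => ∑ i : Fin 4,
      ![1 + a ^ 2 + b ^ 2, 2 * a, 2 * a * b, 2 * b] i
        * Real.cos (![0, 2 * π, 4 * π, 6 * π] i * y) := by
    funext y
    simp [Fin.sum_univ_four, eq_cos]
  rw [h, deriv_deriv_sum_mul_cos]
  simp only [Fin.sum_univ_four, Matrix.cons_val_zero, Matrix.cons_val_one, Matrix.cons_val]
  ring

theorem abs_deriv_deriv_lt (a b C : ℝ)
    (h : ∀ u : ℝ, -1 ≤ u → u ≤ 1 →
      79 * |a * u + 4 * a * b * (2 * u ^ 2 - 1) + 9 * b * (4 * u ^ 3 - 3 * u)| <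
        C * (1 + a ^ 2 + b ^ 2 + 2 * a * u + 2 * a * b * (2 * u ^ 2 - 1)
          + 2 * b * (4 * u ^ 3 - 3 * u)))
    (x : ℝ) :
    |deriv (deriv (sqNormTrinomial a b)) x| < C * sqNormTrinomial a b x := by
  have hcos2 : Real.cos (4 * π * x) = 2 * Real.cos (2 * π * x) ^ 2 - 1 := by
    rw [← Real.cos_two_mul]; ring_nf
  have hcos3 : Real.cos (6 * π * x) = 4 * Real.cos (2 * π * x) ^ 3 - 3 * Real.cos (2 * π * x) := by
    rw [← Real.cos_three_mul]; ring_nf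
  have hpi : 8 * π ^ 2 < 79 := by nlinarith [pi_lt_d4, pi_pos]
  rw [deriv_deriv_eq_cos, eq_cos, hcos2, hcos3, abs_mul,
    show |-8 * π ^ 2| = 8 * π ^ 2 by simp]
  calc 8 * π ^ 2 * |_| ≤ 79 * |_| := by gcongr
    _ < _ := h _ (Real.neg_one_le_cos _) (Real.cos_le_one _)

end sqNormTrinomial

-- Each case is a cubic inequality `0 < f u` on `[-1, 1]`; the hint point `m` is the minimum of `f`
-- there, and `f = c + (α (1 + u) + β (1 - u)) (u - m)²` with `α, β, c ≥ 0`.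
theorem cubic_bound_plus {u : ℝ} (h₁ : -1 ≤ u) (h₂ : u ≤ 1) :
    79 * |36 * u ^ 3 + 8 * u ^ 2 - 26 * u - 4| < 2200 * (8 * u ^ 3 + 4 * u ^ 2 - 4 * u + 1) := by
  have ha : 0 ≤ 1 + u := by linarith
  have hb : 0 ≤ 1 - u := by linarith
  rcases abs_cases (36 * u ^ 3 + 8 * u ^ 2 - 26 * u - 4) with ⟨h, -⟩ | ⟨h, -⟩ <;> rw [h]
  · nlinarith [mul_nonneg ha (sq_nonneg (u - 0.2473)), mul_nonneg hb (sq_nonneg (u - 0.2473))]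
  · nlinarith [mul_nonneg ha (sq_nonneg (u - 0.2941)), mul_nonneg hb (sq_nonneg (u - 0.2941))]

theorem cubic_bound_minus {u : ℝ} (h₁ : -1 ≤ u) (h₂ : u ≤ 1) :
    79 * |4 + 28 * u - 8 * u ^ 2 - 36 * u ^ 3| < 4000 * (-8 * u ^ 3 - 4 * u ^ 2 + 8 * u + 5) := by
  have ha : 0 ≤ 1 + u := by linarith
  have hb : 0 ≤ 1 - u := by linarith
  rcases abs_cases (4 + 28 * u - 8 * u ^ 2 - 36 * u ^ 3) with ⟨h, -⟩ | ⟨h, -⟩ <;> rw [h]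
  · nlinarith [mul_nonneg ha (sq_nonneg (u + 0.7851)), mul_nonneg hb (sq_nonneg (u + 0.7851))]
  · nlinarith [mul_nonneg ha (sq_nonneg (u + 0.75292)), mul_nonneg hb (sq_nonneg (u + 0.75292))]

theorem stmt_12
    (Gp Gm : ℝ → ℝ)
    (hGp : ∀ x : ℝ, Gp x = (‖1 + Complex.exp (2 * π * Complex.I * x) +
        Complex.exp (2 * π * Complex.I * (3 * x))‖) ^ 2)
    (hGm : ∀ x : ℝ, Gm x = (‖1 + Complex.exp (2 * π * Complex.I * x) -
        Complex.exp (2 * π * Complex.I * (3 * x))‖) ^ 2) :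
    ∀ x : ℝ, |deriv (deriv Gp) x| < 2200 * Gp x ∧ |deriv (deriv Gm) x| < 4000 * Gm x := by
  have hp : Gp = sqNormTrinomial 1 1 := funext fun x => by simp [hGp, sqNormTrinomial]
  have hm : Gm = sqNormTrinomial 1 (-1) := funext fun x => by
    simp [hGm, sqNormTrinomial, sub_eq_add_neg]
  intro x
  rw [hp, hm]
  refine ⟨sqNormTrinomial.abs_deriv_deriv_lt 1 1 2200 (fun u h₁ h₂ => ?_) x,
    sqNormTrinomial.abs_deriv_deriv_lt 1 (-1) 4000 (fun u h₁ h₂ => ?_) x⟩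
  · convert cubic_bound_plus h₁ h₂ using 2 <;> ring_nf
  · convert cubic_bound_minus h₁ h₂ using 2 <;> ring_nf
end
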